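/- arXiv:2408.06493 — 2 statements merged into one kernel-verified Lean document; each statement's English description precedes it below -/
import Mathlib

section
/- (Optimisation landscape of unit-depth QAOA for decision problems.) Fix n : ℕ, real angles β, γ, and a finite set T of bit strings (Fin n → Bool). Let C_T be the diagonal complex matrix with entry 1 at each z ∈ T and 0 otherwise, X the matrix with X z k = 1 if hammingDist z k = 1 and 0 otherwise, u the vector with every entry ((2:ℂ)^n)^(−1/2), and ψ := Matrix.exp(−(i·β)•X) *ᵥ (Matrix.exp(−(i·γ)•C_T) *ᵥ u). Then the expectation value F₁(β,γ) := ⟨ψ, C_T ψ⟩ = (star ψ) ⬝ᵥ (C_T *ᵥ ψ) satisfies F₁(β,γ) = (1/2^n) · Σ_{k ∈ T} ‖c_k(β,γ)‖², where c_k(β,γ) := Σ_{d=0}^{n} ( (#_d(k) : ℂ)·(exp(−i·γ)−1) + (n.choose d : ℂ) ) · f_n(β,d), ‖·‖² denotes Complex.normSq, and the right-hand side is a nonnegative real number coerced to ℂ. -/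
/-!
The mixer `X` is the adjacency matrix of the hypercube, i.e. the sum of the commuting
involutions `pauliX j` flipping bit `j`. Hence
`exp (c • X) = ∏ⱼ (cosh c • 1 + sinh c • pauliX j)` has `(z, k)` entry `cosh c ^ (n - d) * sinh c ^ d` with `d = hammingDist z k`, which is
`f_n(β, d)` at `c = -iβ`. The phase separator is diagonal, with entry `e^{-iγ}` on `T` and `1`
off it, so the amplitude of `ψ` at `k` is `2^{-n/2}` times
`∑_z f_n(β, d(z, k)) + (e^{-iγ} - 1) ∑_{z ∈ T} f_n(β, d(z, k))`. Grouping by distance, with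
`n.choose d` strings at distance `d` from `k`, this is `2^{-n/2} c_k`, and
`⟨ψ, C_T ψ⟩ = ∑_{k ∈ T} |ψ_k|²`.
-/

open Complex Matrix Finset

theorem NormedSpace.exp_smul_of_mul_self_eq_one {𝔸 : Type*} [Ring 𝔸] [Algebra ℂ 𝔸]
    [TopologicalSpace 𝔸] [IsTopologicalRing 𝔸] [T2Space 𝔸] [ContinuousSMul ℂ 𝔸]
    {A : 𝔸} (hA : A * A = 1) (c : ℂ) :
    NormedSpace.exp (c • A) = cosh c • (1 : 𝔸) + sinh c • A := by
  have hpow : ∀ k, A ^ (2 * k) = 1 := fun k => by rw [pow_mul, sq, hA, one_pow]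
  rw [NormedSpace.exp_eq_tsum ℂ]
  refine HasSum.tsum_eq (HasSum.even_add_odd ?_ ?_)
  · convert (Complex.hasSum_cosh c).smul_const (1 : 𝔸) using 2 with k
    rw [smul_pow, hpow, smul_smul, inv_mul_eq_div]
  · convert (Complex.hasSum_sinh c).smul_const A using 2 with k
    rw [smul_pow, pow_succ A, hpow, one_mul, smul_smul, inv_mul_eq_div]

section Diagonal

variable {ι : Type*} [Fintype ι] [DecidableEq ι]

theorem Matrix.exp_smul_diagonal_indicator (c : ℂ) (T : Finset ι) :
    NormedSpace.exp (c • diagonal fun z => if z ∈ T then (1 : ℂ) else 0) =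
      diagonal fun z => if z ∈ T then Complex.exp c else 1 := by
  rw [← diagonal_smul, exp_diagonal]
  congr 1
  ext z
  split_ifs with hz <;> simp [hz, Complex.exp_eq_exp_ℂ]

theorem Matrix.star_dotProduct_diagonal_indicator_mulVec (T : Finset ι) (v : ι → ℂ) :
    star v ⬝ᵥ (diagonal (fun z => if z ∈ T then (1 : ℂ) else 0) *ᵥ v) =
      ((∑ k ∈ T, normSq (v k) : ℝ) : ℂ) := by
  simp only [dotProduct, mulVec_diagonal, Pi.star_apply, ite_mul, one_mul, zero_mul, mul_ite,
    mul_zero, sum_ite_mem, univ_inter]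
  push_cast
  exact sum_congr rfl fun k _ => normSq_eq_conj_mul_self.symm

end Diagonal

theorem Complex.normSq_cpow_neg_half {x : ℝ} (hx : 0 < x) :
    normSq ((x : ℂ) ^ (-(1 / 2 : ℂ))) = x⁻¹ := by
  rw [normSq_eq_norm_sq, norm_cpow_eq_rpow_re_of_pos hx, ← Real.rpow_natCast,
    ← Real.rpow_mul hx.le]
  norm_num [Real.rpow_neg_one]

namespace Hypercube

variable {n : ℕ}

def flipBit (j : Fin n) : Equiv.Perm (Fin n → Bool) :=
  Function.Involutive.toPerm (fun z => Function.update z j (!z j)) fun z => by simp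

theorem flipBit_apply (j : Fin n) (z : Fin n → Bool) (i : Fin n) :
    flipBit j z i = if i = j then !z j else z i :=
  Function.update_apply ..

theorem flipBit_mul_self (j : Fin n) : flipBit j * flipBit j = 1 := by
  ext z i
  simp only [Equiv.Perm.mul_apply, flipBit_apply, Equiv.Perm.one_apply]
  split_ifs <;> simp_all

theorem flipBit_commute (i j : Fin n) : Commute (flipBit i) (flipBit j) := by
  ext z l
  simp only [Equiv.Perm.mul_apply, flipBit_apply]
  split_ifs <;> subst_vars <;> simp_all

theorem flipBit_apply_eq_iff {j : Fin n} {z k : Fin n → Bool} :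
    flipBit j z = k ↔ ({i | z i ≠ k i} : Finset (Fin n)) = {j} := by
  simp only [funext_iff, Finset.ext_iff, flipBit_apply, Finset.mem_filter, Finset.mem_univ,
    true_and, Finset.mem_singleton]
  refine forall_congr' fun i => ?_
  split_ifs with h
  · subst h; cases z i <;> cases k i <;> simp
  · simp [h]

def pauliX (j : Fin n) : Matrix (Fin n → Bool) (Fin n → Bool) ℂ := (flipBit j).permMatrix ℂ

theorem pauliX_mul_self (j : Fin n) : pauliX j * pauliX j = 1 := by
  rw [pauliX, ← permMatrix_mul, flipBit_mul_self, permMatrix_one]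

theorem pauliX_commute (i j : Fin n) : Commute (pauliX i) (pauliX j) := by
  rw [Commute, SemiconjBy, pauliX, pauliX, ← permMatrix_mul, ← permMatrix_mul,
    (flipBit_commute i j).eq]

theorem pauliX_mul_apply (j : Fin n) (M : Matrix (Fin n → Bool) (Fin n → Bool) ℂ)
    (z k : Fin n → Bool) :
    (pauliX j * M) z k = M (flipBit j z) k := by
  rw [pauliX, Equiv.Perm.permMatrix, PEquiv.toMatrix_toPEquiv_mul, submatrix_apply, id]

theorem sum_pauliX :
    ∑ j, pauliX j =
      of fun z k : Fin n → Bool => if hammingDist z k = 1 then (1 : ℂ) else 0 := by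
  ext z k
  simp only [Matrix.sum_apply, pauliX, Equiv.Perm.permMatrix, PEquiv.toMatrix_apply,
    Equiv.toPEquiv_apply, Option.mem_def, Option.some.injEq, flipBit_apply_eq_iff, of_apply]
  change _ = if #{i | z i ≠ k i} = 1 then _ else _
  split_ifs with h
  · obtain ⟨a, ha⟩ := card_eq_one.mp h
    simp [ha]
  · exact sum_eq_zero fun j _ => if_neg fun hj => h (by rw [hj, card_singleton])

theorem exp_smul_sum_pauliX_apply (c : ℂ) (S : Finset (Fin n)) (z k : Fin n → Bool) :
    NormedSpace.exp (c • ∑ j ∈ S, pauliX j) z k =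
      ∏ j, if j ∈ S then (if z j = k j then cosh c else sinh c)
        else (if z j = k j then 1 else 0) := by
  induction S using Finset.induction_on generalizing z with
  | empty =>
    simp only [sum_empty, smul_zero, NormedSpace.exp_zero, notMem_empty, if_false, prod_boole,
      mem_univ, true_implies, one_apply, funext_iff]
  | @insert a S ha ih =>
    have hcomm : Commute (c • pauliX a) (c • ∑ j ∈ S, pauliX j) :=
      ((Commute.sum_right _ _ _ fun j _ => pauliX_commute a j).smul_left c).smul_right c
    rw [sum_insert ha, smul_add, Matrix.exp_add_of_commute _ _ hcomm,
      NormedSpace.exp_smul_of_mul_self_eq_one (pauliX_mul_self a), add_mul, smul_mul, one_mul,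
      smul_mul, Matrix.add_apply, Matrix.smul_apply, Matrix.smul_apply, pauliX_mul_apply, ih, ih,
      Fintype.prod_eq_mul_prod_compl a,
      Fintype.prod_eq_mul_prod_compl a (f := fun j => if j ∈ S then _ else _),
      Fintype.prod_eq_mul_prod_compl a]
    have hP : ∀ w : Fin n → Bool, (∀ i ≠ a, w i = z i) →
        (∏ i ∈ ({a}ᶜ : Finset (Fin n)), if i ∈ S then (if w i = k i then cosh c else sinh c)
          else if w i = k i then 1 else 0) =
        ∏ i ∈ ({a}ᶜ : Finset (Fin n)),
          if i ∈ insert a S then (if z i = k i then cosh c else sinh c)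
          else if z i = k i then 1 else 0 := fun w hw =>
      prod_congr rfl fun i hi => by
        have hia : i ≠ a := by simpa using hi
        simp only [hw i hia, mem_insert, hia, false_or]
    rw [hP z fun _ _ => rfl, hP (flipBit a z) fun i hi => by rw [flipBit_apply, if_neg hi],
      flipBit_apply, if_pos rfl, if_neg ha, if_neg ha, if_pos (mem_insert_self a S)]
    cases z a <;> cases k a <;> simp

theorem exp_smul_hypercube_apply (c : ℂ) (z k : Fin n → Bool) :
    NormedSpace.exp
        (c • of fun z k : Fin n → Bool => if hammingDist z k = 1 then (1 : ℂ) else 0) z k =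
      cosh c ^ (n - hammingDist z k) * sinh c ^ hammingDist z k := by
  have hcard : #{j | z j = k j} + hammingDist z k = n := by
    simpa [hammingDist] using card_filter_add_card_filter_not (s := univ) (fun j => z j = k j)
  rw [← sum_pauliX, exp_smul_sum_pauliX_apply]
  simp only [mem_univ, if_true]
  rw [prod_ite, prod_const, prod_const, show #{j | z j = k j} = n - hammingDist z k by omega]
  rfl

theorem exp_neg_I_mul_smul_hypercube_apply (β : ℝ) (z k : Fin n → Bool) :
    NormedSpace.exp
        ((-(I * β)) • of fun z k : Fin n → Bool => if hammingDist z k = 1 then (1 : ℂ) else 0)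
        z k =
      (Real.cos β : ℂ) ^ (n - hammingDist z k) * (-(I * Real.sin β)) ^ hammingDist z k := by
  rw [exp_smul_hypercube_apply, mul_comm I, cosh_neg, sinh_neg, cosh_mul_I, sinh_mul_I,
    ofReal_cos, ofReal_sin, mul_comm _ I]

theorem card_hammingDist_eq (k : Fin n → Bool) (d : ℕ) :
    #{z | hammingDist z k = d} = n.choose d := by
  have hmem : ∀ (S : Finset (Fin n)) i, (if i ∈ S then !k i else k i) ≠ k i ↔ i ∈ S := by
    intro S i; split_ifs with h <;> simp [h]
  rw [show n.choose d = #(powersetCard d (univ : Finset (Fin n))) by simp]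
  refine card_nbij' (fun z => ({i | z i ≠ k i} : Finset (Fin n)))
    (fun S i => if i ∈ S then !k i else k i) ?_ ?_ ?_ ?_
  · intro z hz
    simpa [mem_powersetCard_univ, hammingDist] using hz
  · intro S hS
    simp_all [hammingDist]
  · intro z _
    funext i
    cases hz : z i <;> cases hk : k i <;> simp [hz, hk]
  · intro S _
    ext i
    simp [hmem]

theorem sum_hammingDist_eq_sum_range (s : Finset (Fin n → Bool)) (k : Fin n → Bool)
    (φ : ℕ → ℂ) :
    ∑ z ∈ s, φ (hammingDist z k) =
      ∑ d ∈ range (n + 1), (#{z ∈ s | hammingDist z k = d} : ℂ) * φ d := by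
  rw [← sum_fiberwise_of_maps_to (g := fun z => hammingDist z k) (t := range (n + 1)) fun z _ =>
    mem_range_succ_iff.mpr (hammingDist_le_card_fintype.trans (Fintype.card_fin n).le)]
  refine sum_congr rfl fun d _ => ?_
  rw [sum_congr rfl fun z hz => by rw [(mem_filter.mp hz).2], sum_const, nsmul_eq_mul]

theorem hammingKernel_mulVec_apply (f : ℕ → ℂ) (q : ℂ) (T : Finset (Fin n → Bool))
    (k : Fin n → Bool) :
    ((of fun z k : Fin n → Bool => f (hammingDist z k)) *ᵥ
        fun z => if z ∈ T then q else 1) k =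
      ∑ d ∈ range (n + 1),
        ((#{z ∈ T | hammingDist z k = d} : ℂ) * (q - 1) + n.choose d) * f d := by
  have hsplit : ∀ z, f (hammingDist k z) * (if z ∈ T then q else 1) =
      f (hammingDist z k) + (q - 1) * if z ∈ T then f (hammingDist z k) else 0 := fun z => by
    rw [hammingDist_comm]; split_ifs <;> ring
  simp only [mulVec, dotProduct, of_apply, hsplit, sum_add_distrib, ← mul_sum, sum_ite_mem,
    univ_inter, sum_hammingDist_eq_sum_range, card_hammingDist_eq]
  rw [mul_sum, ← sum_add_distrib]
  exact sum_congr rfl fun d _ => by ring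

end Hypercube

theorem qaoa_landscape (n : ℕ) (β γ : ℝ) (T : Finset (Fin n → Bool)) :
    let C_T : Matrix (Fin n → Bool) (Fin n → Bool) ℂ :=
      Matrix.diagonal (fun z => if z ∈ T then 1 else 0)
    let X : Matrix (Fin n → Bool) (Fin n → Bool) ℂ :=
      Matrix.of (fun z k => if hammingDist z k = 1 then (1 : ℂ) else 0)
    let u : (Fin n → Bool) → ℂ := fun _ => ((2 : ℂ) ^ n) ^ (-(1 / 2 : ℂ))
    let ψ : (Fin n → Bool) → ℂ :=
      NormedSpace.exp ((-(Complex.I * β)) • X) *ᵥ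
        (NormedSpace.exp ((-(Complex.I * γ)) • C_T) *ᵥ u)
    let fn : ℝ → ℕ → ℂ := fun β d =>
      (Real.cos β : ℂ) ^ (n - d) * (-(Complex.I * Real.sin β)) ^ d
    let c : (Fin n → Bool) → ℂ := fun k =>
      ∑ d ∈ Finset.range (n + 1),
        (((T.filter (fun z => hammingDist z k = d)).card : ℂ) *
            (Complex.exp (-(Complex.I * γ)) - 1) + (n.choose d : ℂ)) * fn β d
    (star ψ) ⬝ᵥ (C_T *ᵥ ψ) =
      (((1 / 2 ^ n : ℝ) * ∑ k ∈ T, Complex.normSq (c k) : ℝ) : ℂ) := by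
  intro C_T X u ψ fn c
  set u₀ : ℂ := ((2 : ℂ) ^ n) ^ (-(1 / 2 : ℂ)) with hu₀_def
  have hu₀ : normSq u₀ = 1 / 2 ^ n := by
    rw [hu₀_def, show (2 : ℂ) ^ n = ((2 ^ n : ℝ) : ℂ) by push_cast; rfl,
      normSq_cpow_neg_half (by positivity), one_div]
  have hphase : NormedSpace.exp ((-(I * γ)) • C_T) *ᵥ u =
      u₀ • fun z => if z ∈ T then Complex.exp (-(I * γ)) else 1 := by
    ext z
    rw [exp_smul_diagonal_indicator, mulVec_diagonal]
    exact mul_comm _ _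
  have hmixer : NormedSpace.exp ((-(I * β)) • X) = of fun z k => fn β (hammingDist z k) :=
    ext (Hypercube.exp_neg_I_mul_smul_hypercube_apply β)
  have hψ : ∀ k, ψ k = u₀ * c k := fun k => by
    simp only [ψ, hphase, hmixer, mulVec_smul, Pi.smul_apply, smul_eq_mul,
      Hypercube.hammingKernel_mulVec_apply]
    rfl
  calc star ψ ⬝ᵥ (C_T *ᵥ ψ) = ((∑ k ∈ T, normSq (ψ k) : ℝ) : ℂ) :=
        star_dotProduct_diagonal_indicator_mulVec T ψ
    _ = _ := by simp only [hψ, normSq_mul, hu₀, mul_sum]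
end

section
/- (Mixed second-moment identity for uniformly sampled target sets.) Fix n ≥ 1, a bit string k : Fin n → Bool, and naturals d₁, d₂, t with 1 ≤ d₁ ≤ n, 1 ≤ d₂ ≤ n, d₁ ≠ d₂, and t ≥ 3. Then the sum, over all finite sets T of bit strings (Fin n → Bool) with |T| = t and k ∈ T, of the product |{z ∈ T | hammingDist z k = d₁}| * |{z ∈ T | hammingDist z k = d₂}| equals (n.choose d₁) * (n.choose d₂) * (2^n − 3).choose (t − 3). -/
/-!
Writing each product `#(T ∩ S_{d₁}) * #(T ∩ S_{d₂})` (with `S_d` the Hamming sphere of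
radius `d` about `k`) as the number of pairs `(a, b) ∈ S_{d₁} × S_{d₂}` inside `T` and
swapping the sums, each pair contributes the number of `t`-sets containing the three distinct points `k`, `a`, `b`,
namely `(2 ^ n - 3).choose (t - 3)`; and `#S_d = n.choose d`.
-/

open Finset

section Counting

variable {α : Type*} [Fintype α] [DecidableEq α]

theorem card_filter_card_eq_and_superset (s : Finset α) {t : ℕ} (hst : #s ≤ t) :
    #{T : Finset α | #T = t ∧ s ⊆ T} = (Fintype.card α - #s).choose (t - #s) := by
  rw [← card_univ, ← card_filter_powersetCard_subset s univ t (subset_univ s) hst]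
  congr 1; ext T; simp

theorem sum_card_filter_mul_card_filter (𝒜 : Finset (Finset α)) (p q : α → Prop)
    [DecidablePred p] [DecidablePred q] :
    ∑ T ∈ 𝒜, #(T.filter p) * #(T.filter q) =
      ∑ a with p a, ∑ b with q b, #(𝒜.filter fun T => a ∈ T ∧ b ∈ T) := by
  have hcount (r : α → Prop) [DecidablePred r] (T : Finset α) :
      #(T.filter r) = ∑ a with r a, if a ∈ T then 1 else 0 := by
    rw [sum_boole, Nat.cast_id, filter_filter]
    congr 1; ext a; simp [and_comm]
  simp_rw [hcount, sum_mul_sum, card_filter]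
  rw [sum_comm]
  refine sum_congr rfl fun a _ => sum_comm.trans <|
    sum_congr rfl fun b _ => sum_congr rfl fun T _ => ?_
  by_cases ha : a ∈ T <;> by_cases hb : b ∈ T <;> simp [ha, hb]

end Counting

theorem card_filter_hammingDist_eq {ι : Type*} [Fintype ι] [DecidableEq ι] (x : ι → Bool)
    (d : ℕ) :
    #{z : ι → Bool | hammingDist z x = d} = (Fintype.card ι).choose d := by
  rw [← card_univ, ← card_powersetCard]
  refine card_nbij' (fun z => ({i | z i ≠ x i} : Finset ι))
    (fun S i => if i ∈ S then !x i else x i) ?_ ?_ ?_ ?_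
  · intro z hz
    simpa [hammingDist, mem_powersetCard_univ] using hz
  · intro S hS
    have : ({i | (if i ∈ S then !x i else x i) ≠ x i} : Finset ι) = S := by
      ext i; by_cases h : i ∈ S <;> simp [h]
    simpa [hammingDist, this, mem_powersetCard_univ] using hS
  · intro z _
    funext i
    by_cases h : z i = x i <;> cases hzi : z i <;> cases hxi : x i <;> simp_all
  · intro S _
    ext i
    by_cases h : i ∈ S <;> simp [h]

theorem uniform_sampling_mixed_second_moment_general (n : ℕ) (k : Fin n → Bool)
    (d₁ d₂ t : ℕ) (hd₁ : 1 ≤ d₁) (hd₂ : 1 ≤ d₂)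
    (hne : d₁ ≠ d₂) (ht : 3 ≤ t) :
    (∑ T ∈ Finset.univ.filter (fun T : Finset (Fin n → Bool) => T.card = t ∧ k ∈ T),
        (T.filter (fun z => hammingDist z k = d₁)).card *
          (T.filter (fun z => hammingDist z k = d₂)).card) =
      n.choose d₁ * n.choose d₂ * (2 ^ n - 3).choose (t - 3) := by
  have hpair (a b : Fin n → Bool) (ha : hammingDist a k = d₁) (hb : hammingDist b k = d₂) :
      #(({T : Finset (Fin n → Bool) | #T = t ∧ k ∈ T} : Finset _).filter
          fun T => a ∈ T ∧ b ∈ T) =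
        (2 ^ n - 3).choose (t - 3) := by
    have hcard : #({k, a, b} : Finset (Fin n → Bool)) = 3 := by
      rw [card_eq_three]
      refine ⟨k, a, b, ?_, ?_, ?_, rfl⟩
      · rintro rfl; simp at ha; omega
      · rintro rfl; simp at hb; omega
      · rintro rfl; exact hne (ha.symm.trans hb)
    have h := card_filter_card_eq_and_superset {k, a, b} (hcard ▸ ht)
    rw [hcard, Fintype.card_fun, Fintype.card_bool, Fintype.card_fin] at h
    rw [← h, filter_filter]
    simp only [insert_subset_iff, singleton_subset_iff, and_assoc]
  rw [sum_card_filter_mul_card_filter, sum_congr rfl fun a ha => sum_congr rfl fun b hb =>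
    hpair a b (mem_filter.1 ha).2 (mem_filter.1 hb).2]
  simp only [sum_const, card_filter_hammingDist_eq, Fintype.card_fin, smul_eq_mul, mul_assoc]

theorem uniform_sampling_mixed_second_moment (n : ℕ) (hn : 1 ≤ n) (k : Fin n → Bool)
    (d₁ d₂ t : ℕ) (hd₁ : 1 ≤ d₁) (hd₁n : d₁ ≤ n) (hd₂ : 1 ≤ d₂) (hd₂n : d₂ ≤ n)
    (hne : d₁ ≠ d₂) (ht : 3 ≤ t) :
    (∑ T ∈ Finset.univ.filter (fun T : Finset (Fin n → Bool) => T.card = t ∧ k ∈ T),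
        (T.filter (fun z => hammingDist z k = d₁)).card *
          (T.filter (fun z => hammingDist z k = d₂)).card) =
      n.choose d₁ * n.choose d₂ * (2 ^ n - 3).choose (t - 3) :=
  uniform_sampling_mixed_second_moment_general n k d₁ d₂ t hd₁ hd₂ hne ht
end
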